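/- Let A be a ring, κ an automorphism, and S an n×n matrix over A_κ((τ)) whose diagonal entries lie in W(A,κ) and whose off-diagonal entries lie in τA_κ[[τ]]. Then S can be reduced by left and right multiplication by elementary matrices to a diagonal matrix whose diagonal entries all lie in W(A,κ); consequently the class of S in K₁(A_κ((τ))) equals the class of a product of elements of W(A,κ). -/

import Mathlib

/-- The additive group of formal series `Σ_{i ≥ -N} aᵢτⁱ`: functions `ℤ → A`
whose support is bounded below. -/
def lbSupport (A : Type*) [Ring A] : AddSubgroup (ℤ → A) where
  carrier := {f | ∃ N : ℤ, ∀ n < N, f n = 0}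
  zero_mem' := ⟨0, fun _ _ => rfl⟩
  add_mem' := by
    rintro f g ⟨N, hN⟩ ⟨M, hM⟩
    exact ⟨min N M, fun n hn => by
      simp [Pi.add_apply, hN n (lt_of_lt_of_le hn (min_le_left N M)),
        hM n (lt_of_lt_of_le hn (min_le_right N M))]⟩
  neg_mem' := by
    rintro f ⟨N, hN⟩
    exact ⟨N, fun n hn => by simp [Pi.neg_apply, hN n hn]⟩

/-- An elementary matrix `eᵢⱼ(r)`: `1`'s on the diagonal and `r` in position
`(i,j)` with `i ≠ j`. -/
def IsElementaryMatrix {R : Type*} [Ring R] {m : Type*} [DecidableEq m] [Fintype m]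
    (E : Matrix m m R) : Prop :=
  ∃ i j r, i ≠ j ∧ E = 1 + Matrix.single i j r

/-!
The pivot `S₀₀` lies in `W = 1 + τA_κ[[τ]]`, and every element of `W` is a unit with inverse in
`W`: the coefficients of a left inverse are solved for one at a time, and a left inverse that
itself has a left inverse is two-sided. Row and column operations with the pivot clear the first
column and row, leaving `diag(S₀₀, T)` with `T` the Schur complement
`Sᵢⱼ - Sᵢ₀ S₀₀⁻¹ S₀ⱼ`. The correction term has order at least two, so `T` again has diagonal
entries in `W` and off-diagonal entries in `τA_κ[[τ]]`, and induction on the size concludes.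
This works for any additive subgroup `I` of a ring, closed under multiplication, such that
`1 + I` is a group of units.
-/

theorem List.prod_map_one_add_of_mul_eq_zero {R : Type*} [Ring R] {l : List R}
    (h : ∀ x ∈ l, ∀ y ∈ l, x * y = 0) : (l.map (1 + ·)).prod = 1 + l.sum := by
  induction l with
  | nil => simp
  | cons x l ih =>
    have hxl : x * l.sum = 0 := by
      have hmap := List.sum_map_mul_left (l := l) (f := id) (r := x)
      rw [List.map_id] at hmap
      rw [← hmap, List.sum_eq_zero]
      simp only [List.mem_map, id]
      rintro _ ⟨y, hy, rfl⟩
      exact h x (by simp) y (by simp [hy])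
    rw [List.map_cons, List.prod_cons, ih fun a ha b hb => h a (by simp [ha]) b (by simp [hb]),
      List.sum_cons, add_mul, one_mul, mul_add, mul_one, hxl]
    abel

namespace Matrix

variable {R : Type*} [Ring R] {k : ℕ}

def blockCons (a : R) (M : Matrix (Fin k) (Fin k) R) : Matrix (Fin (k + 1)) (Fin (k + 1)) R :=
  of (Fin.cons (Fin.cons a 0) fun i => Fin.cons 0 (M i))

@[simp] theorem blockCons_zero_zero (a : R) (M : Matrix (Fin k) (Fin k) R) :
    blockCons a M 0 0 = a := rfl

@[simp] theorem blockCons_zero_succ (a : R) (M : Matrix (Fin k) (Fin k) R) (j : Fin k) :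
    blockCons a M 0 j.succ = 0 := rfl

@[simp] theorem blockCons_succ_zero (a : R) (M : Matrix (Fin k) (Fin k) R) (i : Fin k) :
    blockCons a M i.succ 0 = 0 := rfl

@[simp] theorem blockCons_succ_succ (a : R) (M : Matrix (Fin k) (Fin k) R) (i j : Fin k) :
    blockCons a M i.succ j.succ = M i j := rfl

theorem blockCons_mul (a b : R) (M N : Matrix (Fin k) (Fin k) R) :
    blockCons a M * blockCons b N = blockCons (a * b) (M * N) := by
  ext i j
  rw [mul_apply, Fin.sum_univ_succ]
  cases i using Fin.cases <;> cases j using Fin.cases <;> simp [mul_apply]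

theorem blockCons_diagonal (a : R) (d : Fin k → R) :
    blockCons a (diagonal d) = diagonal (Fin.cons a d) := by
  ext i j
  cases i using Fin.cases <;> cases j using Fin.cases <;>
    simp [diagonal_apply, Fin.succ_ne_zero, (Fin.succ_ne_zero _).symm]

theorem blockCons_one_one : blockCons (1 : R) 1 = (1 : Matrix (Fin (k + 1)) (Fin (k + 1)) R) := by
  rw [← diagonal_one, ← diagonal_one, blockCons_diagonal]
  congr
  ext i
  cases i using Fin.cases <;> rfl

def blockConsOneHom : Matrix (Fin k) (Fin k) R →* Matrix (Fin (k + 1)) (Fin (k + 1)) R where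
  toFun := blockCons 1
  map_one' := blockCons_one_one
  map_mul' M N := by rw [blockCons_mul, one_mul]

theorem one_add_sum_single_succ_zero_mul_apply (c : Fin k → R)
    (M : Matrix (Fin (k + 1)) (Fin (k + 1)) R) (p q : Fin (k + 1)) :
    ((1 + ∑ i : Fin k, single i.succ 0 (c i) : Matrix (Fin (k + 1)) (Fin (k + 1)) R) * M) p q =
      M p q + (Fin.cons 0 c : Fin (k + 1) → R) p * M 0 q := by
  rw [add_mul, one_mul, add_apply, Finset.sum_mul, sum_apply]
  congr 1
  cases p using Fin.cases with
  | zero => simp [single_mul_apply_of_ne, (Fin.succ_ne_zero _).symm]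
  | succ p =>
    rw [Finset.sum_eq_single p (fun i _ hi => single_mul_apply_of_ne
      (h := (Fin.succ_injective _).ne hi.symm) ..) (absurd (Finset.mem_univ p)),
      single_mul_apply_same]
    rfl

theorem mul_one_add_sum_zero_single_succ_apply (c : Fin k → R)
    (M : Matrix (Fin (k + 1)) (Fin (k + 1)) R) (p q : Fin (k + 1)) :
    (M * (1 + ∑ j : Fin k, single 0 j.succ (c j) : Matrix (Fin (k + 1)) (Fin (k + 1)) R)) p q =
      M p q + M p 0 * (Fin.cons 0 c : Fin (k + 1) → R) q := by
  rw [mul_add, mul_one, add_apply, Finset.mul_sum, sum_apply]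
  congr 1
  cases q using Fin.cases with
  | zero => simp [mul_single_apply_of_ne, (Fin.succ_ne_zero _).symm]
  | succ q =>
    rw [Finset.sum_eq_single q (fun j _ hj => mul_single_apply_of_ne
      (hbj := (Fin.succ_injective _).ne hj.symm) ..) (absurd (Finset.mem_univ q)),
      mul_single_apply_same]
    rfl

theorem prod_finRange_one_add_single_succ_zero (c : Fin k → R) :
    ((List.finRange k).map fun i => 1 + single i.succ (0 : Fin (k + 1)) (c i)).prod =
      1 + ∑ i : Fin k, single i.succ 0 (c i) := by
  rw [Fin.sum_univ_def, ← List.prod_map_one_add_of_mul_eq_zero, List.map_map]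
  · rfl
  · simp [single_mul_single_of_ne, (Fin.succ_ne_zero _).symm]

theorem prod_finRange_one_add_single_zero_succ (c : Fin k → R) :
    ((List.finRange k).map fun j => 1 + single (0 : Fin (k + 1)) j.succ (c j)).prod =
      1 + ∑ j : Fin k, single 0 j.succ (c j) := by
  rw [Fin.sum_univ_def, ← List.prod_map_one_add_of_mul_eq_zero, List.map_map]
  · rfl
  · simp [single_mul_single_of_ne, Fin.succ_ne_zero]

theorem exists_elementary_mul_mul_eq_blockCons (S : Matrix (Fin (k + 1)) (Fin (k + 1)) R)
    {b : R} (hb : b * S 0 0 = 1) (hb' : S 0 0 * b = 1) :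
    ∃ Ls Rs : List (Matrix (Fin (k + 1)) (Fin (k + 1)) R),
      (∀ E ∈ Ls, IsElementaryMatrix E) ∧ (∀ E ∈ Rs, IsElementaryMatrix E) ∧
      Ls.prod * S * Rs.prod =
        blockCons (S 0 0) (of fun i j => S i.succ j.succ - S i.succ 0 * b * S 0 j.succ) := by
  refine ⟨(List.finRange k).map fun i => 1 + single i.succ 0 (-(S i.succ 0 * b)),
    (List.finRange k).map fun j => 1 + single 0 j.succ (-(b * S 0 j.succ)), ?_, ?_, ?_⟩
  · simpa using fun i => ⟨i.succ, 0, _, Fin.succ_ne_zero i, rfl⟩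
  · simpa using fun j => ⟨0, j.succ, _, (Fin.succ_ne_zero j).symm, rfl⟩
  rw [prod_finRange_one_add_single_succ_zero, prod_finRange_one_add_single_zero_succ]
  ext p q
  simp only [mul_one_add_sum_zero_single_succ_apply, one_add_sum_single_succ_zero_mul_apply]
  cases p using Fin.cases <;> cases q using Fin.cases <;>
    simp [mul_assoc, hb, sub_eq_add_neg, ← mul_assoc (S 0 0), hb']

end Matrix

theorem IsElementaryMatrix.blockCons_one {R : Type*} [Ring R] {k : ℕ}
    {E : Matrix (Fin k) (Fin k) R}
    (hE : IsElementaryMatrix E) : IsElementaryMatrix (Matrix.blockCons 1 E) := by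
  obtain ⟨i, j, r, hij, rfl⟩ := hE
  refine ⟨i.succ, j.succ, r, (Fin.succ_injective _).ne hij, ?_⟩
  ext p q
  cases p using Fin.cases <;> cases q using Fin.cases <;>
    simp [Matrix.one_apply, Matrix.single_apply, Fin.succ_ne_zero, (Fin.succ_ne_zero _).symm]

theorem exists_elementary_mul_mul_eq_diagonal {R : Type*} [Ring R] (I : AddSubgroup R)
    (hI_mul : ∀ x ∈ I, ∀ y ∈ I, x * y ∈ I)
    (hI_inv : ∀ x ∈ I, ∃ y ∈ I, (1 + y) * (1 + x) = 1 ∧ (1 + x) * (1 + y) = 1) :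
    ∀ {k : ℕ} (S : Matrix (Fin k) (Fin k) R), (∀ i, S i i - 1 ∈ I) →
      (∀ i j, i ≠ j → S i j ∈ I) →
      ∃ (Ls Rs : List (Matrix (Fin k) (Fin k) R)) (d : Fin k → R),
        (∀ E ∈ Ls, IsElementaryMatrix E) ∧ (∀ E ∈ Rs, IsElementaryMatrix E) ∧
        (∀ i, d i - 1 ∈ I) ∧ Ls.prod * S * Rs.prod = Matrix.diagonal d
  | 0, S, _, _ => ⟨[], [], ![], by simp, by simp, nofun, Subsingleton.elim _ _⟩
  | k + 1, S, hdiag, hoff => by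
    obtain ⟨y, hy, hyl, hyr⟩ := hI_inv _ (hdiag 0)
    rw [add_sub_cancel] at hyl hyr
    obtain ⟨L₁, R₁, hL₁, hR₁, hS⟩ := Matrix.exists_elementary_mul_mul_eq_blockCons S hyl hyr
    have hcorr : ∀ i j : Fin k, S i.succ 0 * (1 + y) * S 0 j.succ ∈ I := fun i j => by
      have hi := hoff _ _ (Fin.succ_ne_zero i)
      have hj := hoff _ _ (Fin.succ_ne_zero j).symm
      rw [mul_add, mul_one, add_mul]
      exact add_mem (hI_mul _ hi _ hj) (hI_mul _ (hI_mul _ hi _ hy) _ hj)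
    obtain ⟨L₂, R₂, d, hL₂, hR₂, hd, hT⟩ := exists_elementary_mul_mul_eq_diagonal I hI_mul hI_inv
      (Matrix.of fun i j => S i.succ j.succ - S i.succ 0 * (1 + y) * S 0 j.succ)
      (fun i => by
        simpa only [Matrix.of_apply, sub_right_comm] using sub_mem (hdiag i.succ) (hcorr i i))
      (fun i j hij => sub_mem (hoff _ _ ((Fin.succ_injective _).ne hij)) (hcorr i j))
    refine ⟨L₂.map Matrix.blockConsOneHom ++ L₁, R₁ ++ R₂.map Matrix.blockConsOneHom,
      Fin.cons (S 0 0) d, ?_, ?_, Fin.cases (hdiag 0) hd, ?_⟩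
    · simpa [or_imp, forall_and] using ⟨fun E hE => (hL₂ E hE).blockCons_one, hL₁⟩
    · simpa [or_imp, forall_and] using ⟨hR₁, fun E hE => (hR₂ E hE).blockCons_one⟩
    rw [List.prod_append, List.prod_append, ← map_list_prod, ← map_list_prod]
    calc _ = Matrix.blockConsOneHom L₂.prod * (L₁.prod * S * R₁.prod) *
          Matrix.blockConsOneHom R₂.prod := by simp only [mul_assoc]
      _ = _ := by
        simp only [hS, Matrix.blockConsOneHom, MonoidHom.coe_mk, OneHom.coe_mk,
          Matrix.blockCons_mul, one_mul, mul_one, hT, Matrix.blockCons_diagonal]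

def lbSupport.ofNatCoeff {A : Type*} [Ring A] (c : ℕ → A) : lbSupport A :=
  ⟨fun | .ofNat n => c n | .negSucc _ => 0, 0, fun | .negSucc _, _ => rfl⟩

/-- `τ^a A_κ[[τ]]`, the elements of order at least `a`. -/
def orderFiltration {A R : Type*} [Ring A] [AddGroup R] (e : R ≃+ lbSupport A) (a : ℤ) :
    AddSubgroup R where
  carrier := {f | ∀ m < a, (e f).1 m = 0}
  zero_mem' := by simp
  add_mem' hf hg m hm := by simp [hf m hm, hg m hm]
  neg_mem' hf m hm := by simp [hf m hm]

theorem mem_orderFiltration {A R : Type*} [Ring A] [AddGroup R] {e : R ≃+ lbSupport A} {a : ℤ}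
    {f : R} : f ∈ orderFiltration e a ↔ ∀ m < a, (e f).1 m = 0 :=
  Iff.rfl

/-- Coefficients of the left inverse of `Σ c n τⁿ` when `c 0 = 1`: the coefficient of `τⁿ`,
`n > 0`, in `(Σ vᵢτⁱ)(Σ cⱼτʲ)` is `Σ_{i ≤ n} vᵢ κⁱ(c (n - i))`, and it must vanish. -/
noncomputable def leftInvCoeff {A : Type*} [Ring A] (κ : RingAut A) (c : ℕ → A) : ℕ → A
  | 0 => 1
  | n + 1 => -∑ i : Fin (n + 1), leftInvCoeff κ c i * (κ ^ (i : ℕ)) (c (n + 1 - i))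

theorem sum_range_leftInvCoeff_mul {A : Type*} [Ring A] (κ : RingAut A) {c : ℕ → A}
    (hc : c 0 = 1) (n : ℕ) :
    ∑ i ∈ Finset.range (n + 1), leftInvCoeff κ c i * (κ ^ i) (c (n - i)) =
      if n = 0 then 1 else 0 := by
  cases n with
  | zero => simp [leftInvCoeff, hc]
  | succ n =>
    rw [Finset.sum_range_succ, Nat.sub_self, hc, map_one, mul_one, leftInvCoeff,
      Fin.sum_univ_eq_sum_range (fun i => leftInvCoeff κ c i * (κ ^ i) (c (n + 1 - i)))]
    simp

section Series

variable {A R : Type*} [Ring A] [Ring R] {κ : RingAut A} {e : R ≃+ lbSupport A}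
  (hone : ∀ n : ℤ, (e 1).1 n = if n = 0 then 1 else 0)
  (hmul : ∀ f g : R, ∀ n : ℤ,
    (e (f * g)).1 n = ∑ᶠ i : ℤ, (e f).1 i * (κ ^ i) ((e g).1 (n - i)))

include hmul in
theorem mul_mem_orderFiltration {f g : R} {a b : ℤ} (hf : f ∈ orderFiltration e a)
    (hg : g ∈ orderFiltration e b) : f * g ∈ orderFiltration e (a + b) := by
  intro m hm
  rw [hmul]
  refine finsum_eq_zero_of_forall_eq_zero fun i => ?_
  rcases lt_or_ge i a with h | h
  · rw [hf i h, zero_mul]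
  · rw [hg _ (by omega), map_zero, mul_zero]

include hmul in
theorem coeff_mul_of_mem_orderFiltration_zero {f g : R} (hf : f ∈ orderFiltration e 0)
    (hg : g ∈ orderFiltration e 0) (n : ℕ) :
    (e (f * g)).1 n = ∑ i ∈ Finset.range (n + 1), (e f).1 i * (κ ^ i) ((e g).1 ↑(n - i)) := by
  rw [hmul, finsum_eq_finsetSum_of_support_subset
    (s := (Finset.range (n + 1)).map Nat.castEmbedding), Finset.sum_map]
  · refine Finset.sum_congr rfl fun i hi => ?_
    rw [Finset.mem_range] at hi
    simp [Nat.cast_sub (Nat.lt_succ_iff.1 hi)]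
  · intro i hi
    rw [Function.mem_support] at hi
    have h0 : 0 ≤ i := by by_contra h; exact hi (by rw [hf i (by omega), zero_mul])
    have hn : i ≤ n := by by_contra h; exact hi (by rw [hg (n - i) (by omega), map_zero, mul_zero])
    exact Finset.mem_coe.2 (Finset.mem_map.2 ⟨i.toNat, by simp; omega, by simp; omega⟩)

include hone in
theorem sub_one_mem_orderFiltration_one_iff {f : R} :
    f - 1 ∈ orderFiltration e 1 ↔ (e f).1 0 = 1 ∧ ∀ m < 0, (e f).1 m = 0 := by
  have hcoeff : ∀ m, (e (f - 1)).1 m = (e f).1 m - if m = 0 then 1 else 0 := fun m => by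
    rw [map_sub, AddSubgroup.coe_sub, Pi.sub_apply, hone]
  simp only [mem_orderFiltration, hcoeff]
  refine ⟨fun h => ⟨by simpa [sub_eq_zero] using h 0 one_pos,
    fun m hm => by simpa [hm.ne] using h m (by omega)⟩, fun ⟨h0, hneg⟩ m hm => ?_⟩
  rcases lt_or_eq_of_le (show m ≤ 0 by omega) with hm | rfl
  · simp [hneg m hm, hm.ne]
  · simp [h0]

include hone hmul in
theorem exists_mul_eq_one_of_sub_one_mem {u : R} (hu : u - 1 ∈ orderFiltration e 1) :
    ∃ v, v - 1 ∈ orderFiltration e 1 ∧ v * u = 1 := by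
  rw [sub_one_mem_orderFiltration_one_iff hone] at hu
  obtain ⟨hu0, hu⟩ := hu
  set v := e.symm (lbSupport.ofNatCoeff (leftInvCoeff κ fun n => (e u).1 n))
  have hv : v ∈ orderFiltration e 0 := fun m hm => by
    cases m with
    | ofNat k => exact absurd hm (Int.not_lt.2 (Int.natCast_nonneg k))
    | negSucc => simp [v, lbSupport.ofNatCoeff]
  refine ⟨v, (sub_one_mem_orderFiltration_one_iff hone).2
    ⟨by simp [v, lbSupport.ofNatCoeff, leftInvCoeff], hv⟩, e.injective (Subtype.ext (funext ?_))⟩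
  rintro (n | n)
  · rw [Int.ofNat_eq_natCast, coeff_mul_of_mem_orderFiltration_zero hmul hv hu, hone]
    simpa [v, lbSupport.ofNatCoeff] using sum_range_leftInvCoeff_mul κ hu0 n
  · rw [mul_mem_orderFiltration hmul hv hu _ (Int.negSucc_lt_zero n), hone, if_neg (by omega)]

include hone hmul in
theorem exists_one_add_inverse {x : R} (hx : x ∈ orderFiltration e 1) :
    ∃ y ∈ orderFiltration e 1, (1 + y) * (1 + x) = 1 ∧ (1 + x) * (1 + y) = 1 := by
  obtain ⟨v, hv, hvu⟩ :=
    exists_mul_eq_one_of_sub_one_mem hone hmul (u := 1 + x) (by simpa using hx)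
  obtain ⟨w, -, hwv⟩ := exists_mul_eq_one_of_sub_one_mem hone hmul hv
  obtain rfl : w = 1 + x := left_inv_eq_right_inv hwv hvu
  exact ⟨v - 1, hv, by simpa using hvu, by simpa using hwv⟩

end Series

/-- Over the twisted Laurent series ring `A_κ((τ))` (encoded
abstractly via `e : R ≃+ lbSupport A`), any `n×n` matrix `S` whose diagonal
entries lie in `W(A,κ) = 1 + τ·A_κ[[τ]]` and whose off-diagonal entries lie in
`τ·A_κ[[τ]]` can be reduced, by left and right multiplication by elementary
matrices, to a diagonal matrix all of whose diagonal entries lie in `W(A,κ)`;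
consequently the class of `S` in `K₁(A_κ((τ)))` equals the class of a product
of elements of `W(A,κ)` (here expressed concretely by the diagonal entries
`d i ∈ W(A,κ)`, since elementary matrices vanish in `K₁`). -/
theorem stmt_16 {A R : Type*} [Ring A] [Ring R] (κ : RingAut A)
    (e : R ≃+ lbSupport A)
    (hone : ∀ n : ℤ, (e 1).1 n = if n = 0 then 1 else 0)
    (hmul : ∀ f g : R, ∀ n : ℤ,
      (e (f * g)).1 n = ∑ᶠ i : ℤ, (e f).1 i * (κ ^ i) ((e g).1 (n - i)))
    (k : ℕ) (S : Matrix (Fin k) (Fin k) R)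
    (hdiag : ∀ i, (e (S i i)).1 0 = 1 ∧ ∀ m : ℤ, m < 0 → (e (S i i)).1 m = 0)
    (hoff : ∀ i j, i ≠ j → ∀ m : ℤ, m ≤ 0 → (e (S i j)).1 m = 0) :
    ∃ (Ls Rs : List (Matrix (Fin k) (Fin k) R)) (d : Fin k → R),
      (∀ E ∈ Ls, IsElementaryMatrix E) ∧
      (∀ E ∈ Rs, IsElementaryMatrix E) ∧
      (∀ i, (e (d i)).1 0 = 1 ∧ ∀ m : ℤ, m < 0 → (e (d i)).1 m = 0) ∧
      Ls.prod * S * Rs.prod = Matrix.diagonal d := by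
  obtain ⟨Ls, Rs, d, hLs, hRs, hd, hS⟩ := exists_elementary_mul_mul_eq_diagonal
    (orderFiltration e 1) (fun x hx y hy m hm => mul_mem_orderFiltration hmul hx hy m (by omega))
    (fun x hx => exists_one_add_inverse hone hmul hx) S
    (fun i => (sub_one_mem_orderFiltration_one_iff hone).2 (hdiag i))
    (fun i j hij m hm => hoff i j hij m (by omega))
  exact ⟨Ls, Rs, d, hLs, hRs, fun i => (sub_one_mem_orderFiltration_one_iff hone).1 (hd i), hS⟩
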